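/- Let a ≥ 2 and let Z = Z_0(a-1, a+1; a-2, a+2) be the graph obtained from K_4 minus an edge by attaching pendant paths of lengths a+1 and a-1 at the two degree-3 vertices (of K_4 minus an edge) and pendant paths of lengths a+2 and a-2 at the two degree-2 vertices. Then Z is transmission irregular if and only if a is odd and a ≢ 1 (mod 3). -/

import Mathlib

/-- The transmission of a vertex: sum of distances to all other vertices. -/
noncomputable def transmission {V : Type*} [Fintype V] (G : SimpleGraph V) (v : V) : ℕ :=
  ∑ u : V, G.dist v u

/-- Arm lengths of `Z₀(a-1, a+1; a-2, a+2)`: paths of lengths `a+1`, `a-1` at the two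
degree-3 vertices (`0`, `1`) and `a+2`, `a-2` at the two degree-2 vertices (`2`, `3`). -/
def armLen (a : ℕ) : Fin 4 → ℕ := ![a + 1, a - 1, a + 2, a - 2]

/-- Vertex set: `Fin 4` is the core `K₄ - e` (edge `{2,3}` missing), and `⟨i, j⟩` is the
`(j+1)`-st vertex of the pendant path attached at core vertex `i`. -/
abbrev ZVert (a : ℕ) : Type := Fin 4 ⊕ (Σ i : Fin 4, Fin (armLen a i))

/-- The graph `Z₀(a-1, a+1; a-2, a+2)`: `K₄` minus the edge `{2,3}`, with a pendant path
of length `a+1` at vertex `0`, `a-1` at vertex `1` (the degree-3 vertices), and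
`a+2` at vertex `2`, `a-2` at vertex `3` (the degree-2 vertices). -/
def Zgraph (a : ℕ) : SimpleGraph (ZVert a) :=
  SimpleGraph.fromRel (fun x y =>
    match x, y with
    | Sum.inl c, Sum.inl c' => c ≠ c' ∧ ¬((c : ℕ) = 2 ∧ (c' : ℕ) = 3) ∧
        ¬((c : ℕ) = 3 ∧ (c' : ℕ) = 2)
    | Sum.inl c, Sum.inr q => c = q.1 ∧ (q.2 : ℕ) = 0
    | Sum.inr q, Sum.inr q' => q.1 = q'.1 ∧ (q'.2 : ℕ) = (q.2 : ℕ) + 1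
    | _, _ => False)

/-!
Hang a path of length `L i` from every vertex `i` of a connected graph `H`. The vertex at depth
`x` on the path of `i` is at distance `|x - y|` from the vertex at depth `y` on the same path and
at distance `x + d_H(i, k) + y` from the one at depth `y` on the path of `k ≠ i`. Summing, its
transmission is `Tr(i) + x (x + N - 1 - 2 L i)`, where `N` is the number of vertices.

For `Z₀(a-1, a+1; a-2, a+2)` this reads `τ_i + x (x + o_i)` with explicit `τ_i`, `o_i`. Equal
transmissions on one path force equal depths. On the paths of `i ≠ k` they give a factorisation
`(x - y + c) (x + y + e) = n` whose first factor is small, and checking its few values leaves only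
the coincidences at depth `(a-2)/2` on the paths of `0` and `2` (`a` even) and at depths
`(a-1)/3`, `(a-4)/3` on the paths of `2` and `3` (`a ≡ 1 mod 3`).
-/

lemma Nat.sum_range_dist_add_mul {x L : ℕ} (h : x ≤ L) :
    ∑ y ∈ Finset.range (L + 1), Nat.dist x y + L * x = ∑ y ∈ Finset.range (L + 1), y + x * x := by
  induction L, h using Nat.le_induction with
  | base =>
    have : ∑ y ∈ Finset.range (x + 1), Nat.dist x y = ∑ y ∈ Finset.range (x + 1), (x - y) :=
      Finset.sum_congr rfl fun y hy => by
        simp only [Finset.mem_range] at hy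
        simp only [Nat.dist]; omega
    rw [this, ← Finset.sum_range_reflect]
    congr 1
    exact Finset.sum_congr rfl fun y hy => by simp only [Finset.mem_range] at hy; omega
  | succ L h ih =>
    have : Nat.dist x (L + 1) = L + 1 - x := by simp only [Nat.dist]; omega
    rw [Finset.sum_range_succ, Finset.sum_range_succ _ (L + 1), this, add_one_mul]
    omega

namespace SimpleGraph

variable {V : Type*} {G : SimpleGraph V}

lemma Walk.le_add_length {f : V → ℕ} (hf : ∀ u w, G.Adj u w → f w ≤ f u + 1) :
    ∀ {u w : V} (p : G.Walk u w), f w ≤ f u + p.length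
  | _, _, .nil => by simp
  | _, _, .cons h p => by
    have := hf _ _ h
    have := p.le_add_length hf
    rw [length_cons]
    omega

lemma exists_walk_length_eq_of_descent {v : V} {f : V → ℕ} (hf : ∀ u, f u = 0 → u = v)
    (hdesc : ∀ u, 0 < f u → ∃ w, G.Adj w u ∧ f w + 1 = f u) (u : V) :
    ∃ p : G.Walk v u, p.length = f u := by
  induction hn : f u generalizing u with
  | zero => obtain rfl := hf u hn; exact ⟨.nil, rfl⟩
  | succ n ih =>
    obtain ⟨w, hwu, hw⟩ := hdesc u (by omega)
    obtain ⟨p, hp⟩ := ih w (by omega)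
    exact ⟨p.concat hwu, by simp [hp]⟩

theorem dist_eq_of_descent {v : V} (f : V → ℕ) (hf : ∀ u, f u = 0 ↔ u = v)
    (hadj : ∀ u w, G.Adj u w → f w ≤ f u + 1)
    (hdesc : ∀ u, 0 < f u → ∃ w, G.Adj w u ∧ f w + 1 = f u) (u : V) :
    G.dist v u = f u := by
  obtain ⟨p, hp⟩ := exists_walk_length_eq_of_descent (fun u => (hf u).1) hdesc u
  obtain ⟨q, hq⟩ := Reachable.exists_walk_length_eq_dist ⟨p⟩
  have := q.le_add_length hadj
  rw [(hf v).2 rfl] at this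
  exact le_antisymm (hp ▸ dist_le p) (by omega)

lemma Connected.exists_adj_dist_add_one {u v : V} (hG : G.Connected) (huv : u ≠ v) :
    ∃ w, G.Adj w v ∧ G.dist u w + 1 = G.dist u v := by
  obtain ⟨p, hp⟩ := hG.exists_walk_length_eq_dist v u
  cases p with
  | nil => exact absurd rfl huv
  | @cons _ w _ h q =>
    refine ⟨w, h.symm, le_antisymm ?_ ?_⟩
    · rw [dist_comm (u := u), dist_comm (u := u), ← hp, Walk.length_cons]
      exact Nat.succ_le_succ (dist_le q)
    · calc G.dist u v ≤ G.dist u w + G.dist w v := hG.dist_triangle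
        _ = G.dist u w + 1 := by rw [dist_eq_one_iff_adj.2 h.symm]

lemma Connected.dist_le_dist_add_one {u v w : V} (hG : G.Connected) (h : G.Adj v w) :
    G.dist u w ≤ G.dist u v + 1 := by
  calc G.dist u w ≤ G.dist u v + G.dist v w := hG.dist_triangle
    _ = G.dist u v + 1 := by rw [dist_eq_one_iff_adj.2 h]

end SimpleGraph

namespace PendantPaths

variable {ι : Type*} {L : ι → ℕ}

def arm : ι ⊕ (Σ i, Fin (L i)) → ι
  | .inl i => i
  | .inr q => q.1

def depth : ι ⊕ (Σ i, Fin (L i)) → ℕ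
  | .inl _ => 0
  | .inr q => q.2 + 1

def vertex (i : ι) : (x : ℕ) → x ≤ L i → ι ⊕ (Σ i, Fin (L i))
  | 0, _ => .inl i
  | x + 1, h => .inr ⟨i, ⟨x, h⟩⟩

@[simp] lemma arm_inl (i : ι) : arm (L := L) (.inl i) = i := rfl
@[simp] lemma arm_inr (q : Σ i, Fin (L i)) : arm (.inr q) = q.1 := rfl
@[simp] lemma depth_inl (i : ι) : depth (L := L) (.inl i) = 0 := rfl
@[simp] lemma depth_inr (q : Σ i, Fin (L i)) : depth (.inr q) = q.2 + 1 := rfl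

@[simp] lemma arm_vertex (i : ι) (x : ℕ) (h : x ≤ L i) : arm (vertex i x h) = i := by
  cases x <;> rfl

@[simp] lemma depth_vertex (i : ι) (x : ℕ) (h : x ≤ L i) : depth (vertex i x h) = x := by
  cases x <;> rfl

lemma depth_le (u : ι ⊕ (Σ i, Fin (L i))) : depth u ≤ L (arm u) := by
  cases u with
  | inl => exact Nat.zero_le _
  | inr q => exact q.2.isLt

lemma ext {u w : ι ⊕ (Σ i, Fin (L i))} (harm : arm u = arm w) (hdepth : depth u = depth w) :
    u = w := by
  rcases u with i | ⟨i, x⟩ <;> rcases w with k | ⟨k, y⟩ <;>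
    simp only [arm_inl, arm_inr, depth_inl, depth_inr] at harm hdepth
  · rw [harm]
  · omega
  · omega
  · subst harm
    obtain rfl : x = y := Fin.ext (by omega)
    rfl

lemma vertex_arm_depth (u : ι ⊕ (Σ i, Fin (L i))) : vertex (arm u) (depth u) (depth_le u) = u :=
  ext (arm_vertex ..) (depth_vertex ..)

lemma sum_eq [Fintype ι] {M : Type*} [AddCommMonoid M] (F : ι → ℕ → M) :
    ∑ u : ι ⊕ (Σ i, Fin (L i)), F (arm u) (depth u) = ∑ i, ∑ x ∈ Finset.range (L i + 1), F i x := by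
  rw [Fintype.sum_sum_type, Fintype.sum_sigma, ← Finset.sum_add_distrib]
  refine Finset.sum_congr rfl fun i _ => ?_
  simp only [arm_inl, arm_inr, depth_inl, depth_inr]
  rw [Finset.sum_range_succ', Fin.sum_univ_eq_sum_range (fun x => F i (x + 1)), add_comm]

lemma card_eq [Fintype ι] : Fintype.card (ι ⊕ (Σ i, Fin (L i))) = ∑ i, (L i + 1) := by
  simp [Finset.sum_add_distrib, add_comm]

end PendantPaths

open PendantPaths

namespace SimpleGraph

variable {ι : Type*} (H : SimpleGraph ι) (L : ι → ℕ)

def withPendantPaths : SimpleGraph (ι ⊕ (Σ i, Fin (L i))) where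
  Adj u w := (arm u = arm w ∧ (depth u + 1 = depth w ∨ depth w + 1 = depth u)) ∨
    (depth u = 0 ∧ depth w = 0 ∧ H.Adj (arm u) (arm w))
  symm.symm u w := by
    rintro (⟨h, h' | h'⟩ | ⟨hu, hw, h⟩)
    exacts [.inl ⟨h.symm, .inr h'⟩, .inl ⟨h.symm, .inl h'⟩, .inr ⟨hw, hu, h.symm⟩]
  loopless.irrefl u := by
    rintro (⟨-, h | h⟩ | ⟨-, -, h⟩)
    exacts [by omega, by omega, H.irrefl h]

variable {H L}

@[simp] lemma withPendantPaths_adj {u w : ι ⊕ (Σ i, Fin (L i))} :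
    (H.withPendantPaths L).Adj u w ↔
      (arm u = arm w ∧ (depth u + 1 = depth w ∨ depth w + 1 = depth u)) ∨
      (depth u = 0 ∧ depth w = 0 ∧ H.Adj (arm u) (arm w)) := Iff.rfl

variable [DecidableEq ι]

noncomputable def pendantDist (H : SimpleGraph ι) (i : ι) (x : ℕ) (k : ι) (y : ℕ) : ℕ :=
  if i = k then Nat.dist x y else x + H.dist i k + y

lemma pendantDist_zero_right (i : ι) (x : ℕ) (k : ι) : H.pendantDist i x k 0 = x + H.dist i k := by
  unfold pendantDist
  split_ifs with h
  · simp [h, Nat.dist_zero_right]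
  · rfl

lemma withPendantPaths_exists_adj_pendantDist (hH : H.Connected) {i : ι} {x : ℕ} (hx : x ≤ L i)
    (w : ι ⊕ (Σ i, Fin (L i))) (h : 0 < H.pendantDist i x (arm w) (depth w)) :
    ∃ w', (H.withPendantPaths L).Adj w' w ∧
      H.pendantDist i x (arm w') (depth w') + 1 = H.pendantDist i x (arm w) (depth w) := by
  rw [← vertex_arm_depth w] at h ⊢
  generalize arm w = k, depth w = y, depth_le w = hy at h ⊢
  simp only [arm_vertex, depth_vertex] at h ⊢
  by_cases hik : i = k
  · subst hik
    simp only [pendantDist, if_true, Nat.dist] at h ⊢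
    rcases lt_or_gt_of_ne (show x ≠ y by omega) with hxy | hxy
    · refine ⟨vertex i (y - 1) (by omega),
        .inl ⟨by simp, .inl (by simp only [depth_vertex]; omega)⟩, ?_⟩
      simp only [arm_vertex, depth_vertex, if_true]
      omega
    · refine ⟨vertex i (y + 1) (by omega), .inl ⟨by simp, .inr (by simp)⟩, ?_⟩
      simp only [arm_vertex, depth_vertex, if_true]
      omega
  · rcases y with _ | y
    · obtain ⟨m, hm, hdist⟩ := hH.exists_adj_dist_add_one hik
      refine ⟨.inl m, .inr ⟨rfl, depth_vertex .., by simpa using hm⟩, ?_⟩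
      simp only [arm_inl, depth_inl, pendantDist_zero_right]
      omega
    · refine ⟨vertex k y (by omega), .inl ⟨by simp, .inl (by simp)⟩, ?_⟩
      simp only [pendantDist, arm_vertex, depth_vertex, if_neg hik]
      omega

theorem withPendantPaths_dist (hH : H.Connected) (u w : ι ⊕ (Σ i, Fin (L i))) :
    (H.withPendantPaths L).dist u w = H.pendantDist (arm u) (depth u) (arm w) (depth w) := by
  refine dist_eq_of_descent (fun w => H.pendantDist (arm u) (depth u) (arm w) (depth w))
    (fun w => ?_) (fun w w' h => ?_) (fun w h => ?_) w
  · constructor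
    · intro h
      unfold pendantDist at h
      split_ifs at h with harm
      · exact ext harm.symm (Nat.eq_of_dist_eq_zero h).symm
      · exact absurd (hH.dist_eq_zero_iff.1 (by omega)) harm
    · rintro rfl
      simp [pendantDist]
  · rcases h with ⟨harm, hdepth⟩ | ⟨hw, hw', hadj⟩
    · unfold pendantDist
      rw [← harm]
      split_ifs
      · simp only [Nat.dist]; omega
      · omega
    · simp only [hw, hw', pendantDist_zero_right]
      exact Nat.add_le_add_left (hH.dist_le_dist_add_one hadj) _ |>.trans_eq (by ring)
  · exact withPendantPaths_exists_adj_pendantDist hH (depth_le u) w h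

lemma pendantDist_zero_left (i : ι) (k : ι) (y : ℕ) : H.pendantDist i 0 k y = H.dist i k + y := by
  unfold pendantDist
  split_ifs with h
  · simp [h, Nat.dist_zero_left]
  · rw [zero_add]

lemma sum_range_pendantDist_add (i : ι) (x : ℕ) (k : ι) (hx : x ≤ L i) :
    ∑ y ∈ Finset.range (L k + 1), H.pendantDist i x k y + (if i = k then (2 * L k + 1) * x else 0) =
      ∑ y ∈ Finset.range (L k + 1), H.pendantDist i 0 k y + (if i = k then x * x else 0) +
        (L k + 1) * x := by
  simp only [pendantDist_zero_left]
  unfold pendantDist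
  split_ifs with h
  · subst h
    have := Nat.sum_range_dist_add_mul hx
    simp only [dist_self, zero_add]
    linarith
  · simp only [add_assoc, Finset.sum_add_distrib, Finset.sum_const, Finset.card_range, smul_eq_mul]
    ring

variable [Fintype ι]

lemma transmission_withPendantPaths (hH : H.Connected) (u : ι ⊕ (Σ i, Fin (L i))) :
    transmission (H.withPendantPaths L) u =
      ∑ k, ∑ y ∈ Finset.range (L k + 1), H.pendantDist (arm u) (depth u) k y := by
  simp only [transmission, withPendantPaths_dist hH]
  exact sum_eq _

lemma two_mul_transmission_withPendantPaths_inl (hH : H.Connected) (i : ι) :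
    2 * transmission (H.withPendantPaths L) (.inl i) = ∑ k, (L k + 1) * (2 * H.dist i k + L k) := by
  simp only [transmission_withPendantPaths hH, arm_inl, depth_inl, pendantDist_zero_left,
    Finset.mul_sum]
  refine Finset.sum_congr rfl fun k _ => ?_
  have gauss := Finset.sum_range_id_mul_two (L k + 1)
  rw [Nat.add_sub_cancel] at gauss
  rw [← Finset.mul_sum, Finset.sum_add_distrib, Finset.sum_const, Finset.card_range, smul_eq_mul]
  linarith

theorem transmission_withPendantPaths_add (hH : H.Connected) (u : ι ⊕ (Σ i, Fin (L i))) :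
    transmission (H.withPendantPaths L) u + (2 * L (arm u) + 1) * depth u =
      transmission (H.withPendantPaths L) (.inl (arm u)) +
        depth u * (depth u + Fintype.card (ι ⊕ (Σ i, Fin (L i)))) := by
  have key := Finset.sum_congr rfl fun k (_ : k ∈ Finset.univ) =>
    H.sum_range_pendantDist_add (arm u) (depth u) k (depth_le u)
  simp only [Finset.sum_add_distrib, Finset.sum_ite_eq, Finset.mem_univ, if_true] at key
  rw [transmission_withPendantPaths hH, transmission_withPendantPaths hH, key, card_eq,
    ← Finset.sum_mul]
  simp only [arm_inl, depth_inl]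
  ring

end SimpleGraph

open SimpleGraph PendantPaths

def diamond : SimpleGraph (Fin 4) := (⊤ : SimpleGraph (Fin 4)).deleteEdges {s(2, 3)}

@[simp] lemma diamond_adj {i k : Fin 4} : diamond.Adj i k ↔ i ≠ k ∧ s(i, k) ≠ s(2, 3) := by
  simp [diamond]

lemma diamond_connected : diamond.Connected := by
  rw [connected_iff_exists_forall_reachable]
  refine ⟨0, fun k => ?_⟩
  rcases eq_or_ne 0 k with rfl | hk
  · rfl
  · exact Adj.reachable (by fin_cases k <;> simp_all)

lemma diamond_dist_two_three : diamond.dist 2 3 = 2 := by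
  have h20 : diamond.Adj 2 0 := by simp
  have h03 : diamond.Adj 0 3 := by simp
  refine le_antisymm (dist_le (.cons h20 (.cons h03 .nil))) ?_
  exact diamond_connected.one_lt_dist_of_ne_of_not_adj (by decide) (by simp)

lemma diamond_dist (i k : Fin 4) :
    diamond.dist i k = ![![0, 1, 1, 1], ![1, 0, 1, 1], ![1, 1, 0, 2], ![1, 1, 2, 0]] i k := by
  fin_cases i <;> fin_cases k <;>
    simp [diamond_dist_two_three, SimpleGraph.dist_comm (u := (3 : Fin 4))]

lemma Zgraph_eq (a : ℕ) : Zgraph a = diamond.withPendantPaths (armLen a) := by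
  ext u w
  rcases u with i | ⟨i, x⟩ <;> rcases w with k | ⟨k, y⟩
  · simp only [Zgraph, fromRel_adj, withPendantPaths_adj, arm_inl, depth_inl, diamond_adj, ne_eq,
      Sum.inl.injEq]
    revert i k
    decide
  · simp [Zgraph]
  · simp [Zgraph, eq_comm]
  · rcases eq_or_ne i k with rfl | hik
    · simp only [Zgraph, fromRel_adj, withPendantPaths_adj, arm_inr, depth_inr, ne_eq,
        Sum.inr.injEq, Sigma.mk.injEq, heq_eq_eq, Fin.ext_iff, true_and, SimpleGraph.irrefl,
        and_false, or_false]
      omega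
    · simp [Zgraph, hik, hik.symm]

/-- `τ_i + x (x + o_i)`: `τ_i` is the transmission of the core vertex `i` of `Zgraph a`, and
`o_i = 4a + 3 - 2 armLen a i`. -/
def zTransmission (a : ℤ) (i : Fin 4) (x : ℤ) : ℤ :=
  ![2 * a ^ 2 + 5 * a + 7, 2 * a ^ 2 + 5 * a + 9, 2 * a ^ 2 + 6 * a + 5, 2 * a ^ 2 + 6 * a + 13] i +
    x * (x + ![2 * a + 1, 2 * a + 5, 2 * a - 1, 2 * a + 7] i)

lemma transmission_Zgraph {a : ℕ} (ha : 2 ≤ a) (v : ZVert a) :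
    (transmission (Zgraph a) v : ℤ) = zTransmission a (arm v) (depth v) := by
  obtain ⟨b, rfl⟩ : ∃ b, a = b + 2 := ⟨a - 2, by omega⟩
  have hadd := transmission_withPendantPaths_add (L := armLen (b + 2)) diamond_connected v
  have hcore := two_mul_transmission_withPendantPaths_inl (L := armLen (b + 2)) diamond_connected
    (arm v)
  rw [card_eq] at hadd
  rw [Zgraph_eq]
  generalize transmission (diamond.withPendantPaths (armLen (b + 2))) v = t at hadd ⊢
  generalize arm v = i, depth v = x at hadd hcore ⊢
  fin_cases i <;>
    simp only [Fin.sum_univ_four, diamond_dist, armLen, zTransmission, Fin.zero_eta, Fin.mk_one,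
      Fin.reduceFinMk, Fin.isValue, Matrix.cons_val_zero, Matrix.cons_val_one, Matrix.cons_val,
      Nat.add_one_sub_one, add_tsub_cancel_right, Nat.cast_add, Nat.cast_ofNat] at hadd hcore ⊢
  all_goals (zify at hadd hcore; linarith)

lemma Int.le_and_le_of_mul_eq {p q n k : ℤ} (hq : 0 < q) (hn : 0 < n) (hk : n < (k + 1) * q)
    (h : p * q = n) : 1 ≤ p ∧ p ≤ k := by
  constructor <;> nlinarith

section

variable {a x y : ℕ}

lemma zTransmission_zero_ne_one (ha : 0 < a) (hy : y ≤ a - 1) :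
    zTransmission a 0 x ≠ zTransmission a 1 y := by
  intro h
  have key : ((y : ℤ) - x + 2) * (x + y + 2 * a + 3) = 4 * a + 4 := by
    simp only [zTransmission, Fin.isValue, Matrix.cons_val_zero, Matrix.cons_val_one] at h
    linear_combination -h
  obtain ⟨h1, h2⟩ := Int.le_and_le_of_mul_eq (k := 2) (by omega) (by omega) (by omega) key
  generalize hp : (y : ℤ) - x + 2 = p at key h1 h2
  interval_cases p <;> omega

lemma zTransmission_zero_ne_two (ha : Odd a) : zTransmission a 0 x ≠ zTransmission a 2 y := by
  intro h
  rw [Nat.odd_iff] at ha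
  have key : ((x : ℤ) - y + 1) * (x + y + 2 * a) = 3 * a - 2 := by
    simp only [zTransmission, Fin.isValue, Matrix.cons_val_zero, Matrix.cons_val] at h
    linear_combination h
  obtain ⟨h1, h2⟩ := Int.le_and_le_of_mul_eq (k := 1) (by omega) (by omega) (by omega) key
  generalize hp : (x : ℤ) - y + 1 = p at key h1 h2
  interval_cases p
  omega

lemma zTransmission_zero_ne_three (ha : Odd a) : zTransmission a 0 x ≠ zTransmission a 3 y := by
  intro h
  rw [Nat.odd_iff] at ha
  have key : ((y : ℤ) - x + 3) * (x + y + 2 * a + 4) = 5 * a + 6 := by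
    simp only [zTransmission, Fin.isValue, Matrix.cons_val_zero, Matrix.cons_val] at h
    linear_combination -h
  obtain ⟨h1, h2⟩ := Int.le_and_le_of_mul_eq (k := 2) (by omega) (by omega) (by omega) key
  generalize hp : (y : ℤ) - x + 3 = p at key h1 h2
  interval_cases p <;> omega

lemma zTransmission_one_ne_two (ha : Odd a) : zTransmission a 1 x ≠ zTransmission a 2 y := by
  intro h
  rw [Nat.odd_iff] at ha
  have key : ((x : ℤ) - y + 3) * (x + y + 2 * a + 2) = 7 * a + 2 := by
    simp only [zTransmission, Fin.isValue, Matrix.cons_val_zero, Matrix.cons_val_one,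
      Matrix.cons_val] at h
    linear_combination h
  obtain ⟨h1, h2⟩ := Int.le_and_le_of_mul_eq (k := 3) (by omega) (by omega) (by omega) key
  generalize hp : (x : ℤ) - y + 3 = p at key h1 h2
  interval_cases p <;> omega

lemma zTransmission_one_ne_three : zTransmission a 1 x ≠ zTransmission a 3 y := by
  intro h
  have key : ((y : ℤ) - x + 1) * (x + y + 2 * a + 6) = a + 2 := by
    simp only [zTransmission, Fin.isValue, Matrix.cons_val_zero, Matrix.cons_val_one,
      Matrix.cons_val] at h
    linear_combination -h
  have := Int.le_and_le_of_mul_eq (k := 0) (by omega) (by omega) (by omega) key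
  omega

lemma zTransmission_two_ne_three (ha : a % 3 ≠ 1) (hx : x ≤ a + 2) :
    zTransmission a 2 x ≠ zTransmission a 3 y := by
  intro h
  have key : ((y : ℤ) - x + 4) * (x + y + 2 * a + 3) = 8 * a + 4 := by
    simp only [zTransmission, Fin.isValue, Matrix.cons_val] at h
    linear_combination -h
  obtain ⟨h1, h2⟩ := Int.le_and_le_of_mul_eq (k := 3) (by omega) (by omega) (by omega) key
  generalize hp : (y : ℤ) - x + 4 = p at key h1 h2
  interval_cases p <;> omega

lemma eq_of_zTransmission_eq (ha : 0 < a) {i : Fin 4}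
    (h : zTransmission a i x = zTransmission a i y) : x = y := by
  set o : ℤ := ![2 * (a : ℤ) + 1, 2 * a + 5, 2 * a - 1, 2 * a + 7] i with ho
  have key : ((x : ℤ) - y) * (x + y + o) = 0 := by
    simp only [zTransmission] at h; linear_combination h
  have hpos : 0 < o := by
    fin_cases i <;>
      simp only [ho, Fin.zero_eta, Fin.mk_one, Fin.reduceFinMk, Fin.isValue, Matrix.cons_val_zero,
        Matrix.cons_val_one, Matrix.cons_val] <;> omega
  rcases mul_eq_zero.1 key with h | h <;> omega

lemma arm_eq_of_zTransmission_eq (ha : 2 ≤ a) (hodd : Odd a) (h3 : a % 3 ≠ 1) {i k : Fin 4}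
    (hx : x ≤ armLen a i) (hy : y ≤ armLen a k) (h : zTransmission a i x = zTransmission a k y) :
    i = k := by
  wlog hik : i ≤ k generalizing i k x y
  · exact (this hy hx h.symm (le_of_not_ge hik)).symm
  fin_cases i <;> fin_cases k <;> first | rfl | exact absurd hik (by decide) | exfalso
  · exact zTransmission_zero_ne_one (by omega) hy h
  · exact zTransmission_zero_ne_two hodd h
  · exact zTransmission_zero_ne_three hodd h
  · exact zTransmission_one_ne_two hodd h
  · exact zTransmission_one_ne_three h
  · exact zTransmission_two_ne_three h3 hx h

lemma zTransmission_zero_eq_two (m : ℕ) :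
    zTransmission ((2 * m + 2 : ℕ) : ℤ) 0 m = zTransmission ((2 * m + 2 : ℕ) : ℤ) 2 m := by
  simp only [zTransmission, Fin.isValue, Matrix.cons_val_zero, Matrix.cons_val]
  push_cast
  ring

lemma zTransmission_two_eq_three (t : ℕ) :
    zTransmission ((3 * t + 4 : ℕ) : ℤ) 2 (t + 1) = zTransmission ((3 * t + 4 : ℕ) : ℤ) 3 t := by
  simp only [zTransmission, Fin.isValue, Matrix.cons_val]
  push_cast
  ring

lemma not_injective_of_zTransmission_eq (ha : 2 ≤ a) {i k : Fin 4} (hik : i ≠ k)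
    (hx : x ≤ armLen a i) (hy : y ≤ armLen a k) (h : zTransmission a i x = zTransmission a k y) :
    ¬ Function.Injective (transmission (Zgraph a)) := by
  intro hinj
  have heq : transmission (Zgraph a) (vertex i x hx) = transmission (Zgraph a) (vertex k y hy) := by
    rw [← Nat.cast_inj (R := ℤ), transmission_Zgraph ha, transmission_Zgraph ha]
    simpa using h
  exact hik (by simpa using congrArg arm (hinj heq))

end

lemma not_injective_transmission_Zgraph_of_even {a : ℕ} (ha : 2 ≤ a) (heven : Even a) :
    ¬ Function.Injective (transmission (Zgraph a)) := by
  obtain ⟨m, rfl⟩ : ∃ m, a = 2 * m + 2 := by obtain ⟨r, hr⟩ := heven; exact ⟨r - 1, by omega⟩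
  exact not_injective_of_zTransmission_eq ha (i := 0) (k := 2) (by decide)
    (by show m ≤ 2 * m + 2 + 1; omega) (by show m ≤ 2 * m + 2 + 2; omega)
    (zTransmission_zero_eq_two m)

lemma not_injective_transmission_Zgraph_of_mod_three {a : ℕ} (ha : 2 ≤ a) (h3 : a % 3 = 1) :
    ¬ Function.Injective (transmission (Zgraph a)) := by
  obtain ⟨t, rfl⟩ : ∃ t, a = 3 * t + 4 := ⟨a / 3 - 1, by omega⟩
  exact not_injective_of_zTransmission_eq ha (i := 2) (k := 3) (by decide)
    (by show t + 1 ≤ 3 * t + 4 + 2; omega) (by show t ≤ 3 * t + 4 - 2; omega)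
    (zTransmission_two_eq_three t)

lemma injective_transmission_Zgraph {a : ℕ} (ha : 2 ≤ a) (hodd : Odd a) (h3 : a % 3 ≠ 1) :
    Function.Injective (transmission (Zgraph a)) := by
  intro v u h
  have h' := congrArg (Nat.cast : ℕ → ℤ) h
  rw [transmission_Zgraph ha, transmission_Zgraph ha] at h'
  have harm := arm_eq_of_zTransmission_eq ha hodd h3 (depth_le v) (depth_le u) h'
  rw [harm] at h'
  exact ext harm (eq_of_zTransmission_eq (by omega) h')

/-- For `a ≥ 2`, the graph `Z₀(a-1, a+1; a-2, a+2)` is transmission irregular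
if and only if `a` is odd and `a ≢ 1 (mod 3)`. -/
theorem stmt_11 (a : ℕ) (ha : 2 ≤ a) :
    Function.Injective (transmission (Zgraph a)) ↔ (Odd a ∧ a % 3 ≠ 1) :=
  ⟨fun hinj => ⟨Nat.not_even_iff_odd.1 fun heven =>
      not_injective_transmission_Zgraph_of_even ha heven hinj,
    fun h3 => not_injective_transmission_Zgraph_of_mod_three ha h3 hinj⟩,
  fun ⟨hodd, h3⟩ => injective_transmission_Zgraph ha hodd h3⟩
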